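/- Let s ∈ (0,1), p ∈ [1,∞), R > 0, let φ : ℝ^N → ℝ be Lipschitz with Lipschitz constant L, and let w ∈ L^p(ℝ^N). Then ∫_{ℝ^N} ( ∫_{B_R(x)} |φ(x) − φ(y)| |w(y)| / |x − y|^{N+s} dy )^p dx ≤ (ω_{N−1}/(1−s))^p R^{(1−s)p} L^p ‖w‖_{L^p(ℝ^N)}^p, where B_R(x) is the ball of radius R centered at x and ω_{N−1} is the surface measure of the unit sphere in ℝ^N. -/

import Mathlib

open MeasureTheory Metric Real
open scoped ENNReal NNReal

noncomputable section

/-- Euclidean space `ℝ^N`. -/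
abbrev Euc (N : ℕ) := EuclideanSpace ℝ (Fin N)

/-- The `(N-1)`-dimensional surface measure `ω_{N-1}` of the unit sphere in `ℝ^N`. -/
def sphereMeasure (N : ℕ) : ℝ := 2 * Real.pi ^ ((N : ℝ) / 2) / Real.Gamma ((N : ℝ) / 2)

lemma lintegral_fun_norm (N : ℕ) (hN : 1 ≤ N) (F : ℝ → ℝ≥0∞) (hF : Measurable F) :
    ∫⁻ x : Euc N, F ‖x‖ =
      (volume : Measure (Euc N)).toSphere Set.univ *
        ∫⁻ y in Set.Ioi (0:ℝ), ENNReal.ofReal (y ^ (N - 1)) * F y := by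
  haveI : Nonempty (Fin N) := ⟨⟨0, hN⟩⟩
  haveI : Nontrivial (Euc N) := inferInstance
  set μ : Measure (Euc N) := volume with hμ
  have hdim : Module.finrank ℝ (Euc N) = N := finrank_euclideanSpace_fin
  have hF2 : Measurable fun p : sphere (0 : Euc N) 1 × Set.Ioi (0:ℝ) => F p.2 :=
    hF.comp (measurable_subtype_coe.comp measurable_snd)
  calc
    ∫⁻ x : Euc N, F ‖x‖ ∂μ = ∫⁻ x in ({0}ᶜ : Set (Euc N)), F ‖x‖ ∂μ := by
      rw [MeasureTheory.restrict_compl_singleton]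
    _ = ∫⁻ x : (({0}ᶜ : Set (Euc N))), F ‖x.1‖ ∂(μ.comap Subtype.val) :=
      (lintegral_subtype_comap (measurableSet_singleton 0).compl fun x => F ‖x‖).symm
    _ = ∫⁻ p : sphere (0 : Euc N) 1 × Set.Ioi (0:ℝ), F p.2
          ∂(μ.toSphere.prod (.volumeIoiPow (Module.finrank ℝ (Euc N) - 1))) := by
      rw [← (μ.measurePreserving_homeomorphUnitSphereProd).lintegral_comp hF2]
      simp
    _ = μ.toSphere Set.univ * ∫⁻ r : Set.Ioi (0:ℝ), F r.1
          ∂(Measure.volumeIoiPow (Module.finrank ℝ (Euc N) - 1)) := by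
      rw [lintegral_prod _ hF2.aemeasurable]
      simp [lintegral_const, mul_comm]
    _ = μ.toSphere Set.univ * ∫⁻ y in Set.Ioi (0:ℝ), ENNReal.ofReal (y ^ (N - 1)) * F y := by
      congr 1
      rw [Measure.volumeIoiPow, lintegral_withDensity_eq_lintegral_mul _
        (show Measurable fun r : Set.Ioi (0:ℝ) =>
            ENNReal.ofReal (r.1 ^ (Module.finrank ℝ (Euc N) - 1)) from
          (measurable_subtype_coe.pow_const _).ennreal_ofReal)
        (show Measurable fun r : Set.Ioi (0:ℝ) => F r.1 from hF.comp measurable_subtype_coe)]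
      rw [hdim]
      simpa only [Pi.mul_apply] using lintegral_subtype_comap measurableSet_Ioi
        (fun y => ENNReal.ofReal (y ^ (N - 1)) * F y)

lemma conv_total (N : ℕ) (K h : Euc N → ℝ≥0∞) (hK : Measurable K) (hh : Measurable h) :
    ∫⁻ x : Euc N, ∫⁻ y, K (x - y) * h y = (∫⁻ z, K z) * ∫⁻ y, h y := by
  have hm : AEMeasurable (Function.uncurry fun x y : Euc N => K (x - y) * h y)
      ((volume : Measure (Euc N)).prod volume) := by
    apply Measurable.aemeasurable
    exact ((hK.comp (measurable_fst.sub measurable_snd)).mul (hh.comp measurable_snd))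
  rw [lintegral_lintegral_swap hm]
  calc
    ∫⁻ y, ∫⁻ x, K (x - y) * h y = ∫⁻ y : Euc N, (∫⁻ z, K z) * h y := by
      refine lintegral_congr fun y => ?_
      rw [lintegral_mul_const _
          (show Measurable fun x : Euc N => K (x - y) from
            hK.comp (measurable_id.sub measurable_const)),
        lintegral_sub_right_eq_self K y, mul_comm]
    _ = (∫⁻ z, K z) * ∫⁻ y, h y := lintegral_const_mul _ hh

lemma young (N : ℕ) (K g : Euc N → ℝ≥0∞) (hK : Measurable K) (hg : Measurable g)
    {p : ℝ} (hp : 1 ≤ p) :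
    ∫⁻ x : Euc N, (∫⁻ y, K (x - y) * g y) ^ p ≤ (∫⁻ z, K z) ^ p * ∫⁻ y, g y ^ p := by
  set I := ∫⁻ z, K z with hI
  rcases eq_or_lt_of_le hp with hp1 | hp1
  · subst hp1
    simp only [ENNReal.rpow_one]
    exact le_of_eq (conv_total N K g hK hg)
  · set q := p / (p - 1) with hq
    have hpq : p.HolderConjugate q := (Real.holderConjugate_iff_eq_conjExponent hp1).2 rfl
    have hp0 : 0 ≤ p := by linarith
    have hq0 : 0 < q := hpq.symm.pos
    have holder : ∀ x : Euc N, (∫⁻ y, K (x - y) * g y) ≤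
        I ^ (1 / q) * (∫⁻ y, K (x - y) * g y ^ p) ^ (1 / p) := by
      intro x
      have hKx : Measurable fun y : Euc N => K (x - y) :=
        hK.comp (measurable_const.sub measurable_id)
      have step : (∫⁻ y, K (x - y) * g y) =
          ∫⁻ y, ((fun y => (K (x - y)) ^ (1 / q)) * fun y => (K (x - y)) ^ (1 / p) * g y) y := by
        refine lintegral_congr fun y => ?_
        have h1 : (K (x - y)) ^ (1 / q) * (K (x - y)) ^ (1 / p) = K (x - y) := by
          rw [← ENNReal.rpow_add_of_nonneg (1 / q) (1 / p) (one_div_nonneg.mpr hq0.le)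
            (one_div_nonneg.mpr (by linarith)), one_div, one_div,
            hpq.symm.inv_add_inv_eq_one, ENNReal.rpow_one]
        simp only [Pi.mul_apply]
        rw [← mul_assoc, h1]
      rw [step]
      have := ENNReal.lintegral_mul_le_Lp_mul_Lq (volume : Measure (Euc N)) hpq.symm
        (f := fun y => (K (x - y)) ^ (1 / q)) (g := fun y => (K (x - y)) ^ (1 / p) * g y)
        (hKx.pow_const _).aemeasurable ((hKx.pow_const _).mul hg).aemeasurable
      refine this.trans (le_of_eq ?_)
      have e1 : (∫⁻ y, ((fun y => (K (x - y)) ^ (1 / q)) y) ^ q) = ∫⁻ y, K (x - y) :=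
        lintegral_congr fun y => by
          rw [← ENNReal.rpow_mul, one_div_mul_cancel hq0.ne', ENNReal.rpow_one]
      have e2 : (∫⁻ y, ((fun y => (K (x - y)) ^ (1 / p) * g y) y) ^ p)
          = ∫⁻ y, K (x - y) * g y ^ p :=
        lintegral_congr fun y => by
          rw [ENNReal.mul_rpow_of_nonneg _ _ hp0, ← ENNReal.rpow_mul,
            one_div_mul_cancel hpq.ne_zero, ENNReal.rpow_one]
      rw [e1, e2, (Measure.measurePreserving_sub_left volume x).lintegral_comp hK]
    calc
      ∫⁻ x : Euc N, (∫⁻ y, K (x - y) * g y) ^ p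
          ≤ ∫⁻ x : Euc N, I ^ (p / q) * (∫⁻ y, K (x - y) * g y ^ p) := by
        refine lintegral_mono fun x => ?_
        calc (∫⁻ y, K (x - y) * g y) ^ p
            ≤ (I ^ (1 / q) * (∫⁻ y, K (x - y) * g y ^ p) ^ (1 / p)) ^ p :=
              ENNReal.rpow_le_rpow (holder x) hp0
          _ = I ^ (p / q) * (∫⁻ y, K (x - y) * g y ^ p) := by
              rw [ENNReal.mul_rpow_of_nonneg _ _ hp0, ← ENNReal.rpow_mul,
                ← ENNReal.rpow_mul, one_div_mul_cancel (by positivity : p ≠ 0),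
                ENNReal.rpow_one]
              congr 2
              field_simp
      _ = I ^ (p / q) * (I * ∫⁻ y, g y ^ p) := by
          rw [lintegral_const_mul _ ((Measurable.lintegral_prod_right
            (((hK.comp (measurable_fst.sub measurable_snd)).mul
              ((hg.pow_const _).comp measurable_snd)))) :
            Measurable fun x : Euc N => ∫⁻ y, K (x - y) * g y ^ p),
            conv_total N K (fun y => g y ^ p) hK (hg.pow_const _)]
      _ = I ^ p * ∫⁻ y, g y ^ p := by
          rw [← mul_assoc]
          congr 1
          have hpq' : p / q = p - 1 := by
            rw [hq]; field_simp
          rw [hpq']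
          conv_rhs => rw [show p = (p - 1) + 1 by ring]
          rw [ENNReal.rpow_add_of_nonneg (p - 1) 1 (by linarith) zero_le_one, ENNReal.rpow_one]

-- toSphere univ = ofReal (sphereMeasure N)
lemma toSphere_univ (N : ℕ) (hN : 1 ≤ N) :
    (volume : Measure (Euc N)).toSphere Set.univ = ENNReal.ofReal (sphereMeasure N) := by
  haveI : Nonempty (Fin N) := ⟨⟨0, hN⟩⟩
  have hN2 : (0:ℝ) < (N : ℝ) / 2 := by positivity
  have hΓ : 0 < Real.Gamma ((N : ℝ) / 2) := Real.Gamma_pos_of_pos hN2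
  rw [Measure.toSphere_apply_univ, EuclideanSpace.volume_ball, finrank_euclideanSpace_fin]
  simp only [Fintype.card_fin, ENNReal.ofReal_one, one_pow, one_mul]
  rw [show ((N : ℝ≥0∞)) = ENNReal.ofReal (N : ℝ) by simp, ← ENNReal.ofReal_mul (by positivity)]
  congr 1
  have hsqrt : (Real.sqrt π) ^ N = π ^ ((N : ℝ) / 2) := by
    rw [Real.sqrt_eq_rpow, ← Real.rpow_natCast (π ^ ((1:ℝ)/2)) N, ← Real.rpow_mul pi_pos.le]
    ring_nf
  have hΓ1 : Real.Gamma ((N : ℝ) / 2 + 1) = ((N : ℝ) / 2) * Real.Gamma ((N : ℝ) / 2) :=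
    Real.Gamma_add_one hN2.ne'
  rw [hsqrt, hΓ1, sphereMeasure]
  have hNne : (N : ℝ) ≠ 0 := by positivity
  field_simp

lemma kernel_lintegral (N : ℕ) (hN : 1 ≤ N) (s : ℝ) (hs : s ∈ Set.Ioo (0:ℝ) 1)
    (R : ℝ) (hR : 0 < R) :
    (∫⁻ z : Euc N, (Metric.ball (0 : Euc N) R).indicator
        (fun z => ENNReal.ofReal (‖z‖ ^ (1 - (N:ℝ) - s))) z)
      = ENNReal.ofReal (sphereMeasure N / (1 - s) * R ^ (1 - s)) := by
  obtain ⟨hs0, hs1⟩ := hs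
  set F : ℝ → ℝ≥0∞ := fun t =>
    (Set.Iio R).indicator (fun t => ENNReal.ofReal (t ^ (1 - (N:ℝ) - s))) t with hF
  have hFmeas : Measurable F := by
    apply Measurable.indicator _ measurableSet_Iio
    fun_prop
  have hKF : ∀ z : Euc N, (Metric.ball (0 : Euc N) R).indicator
      (fun z => ENNReal.ofReal (‖z‖ ^ (1 - (N:ℝ) - s))) z = F ‖z‖ := by
    intro z
    have hmem : z ∈ Metric.ball (0 : Euc N) R ↔ ‖z‖ ∈ Set.Iio R := by
      simp [mem_ball_zero_iff]
    by_cases h : ‖z‖ ∈ Set.Iio R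
    · simp only [hF, Set.indicator_of_mem h, Set.indicator_of_mem (hmem.mpr h)]
    · simp only [hF, Set.indicator_of_notMem h,
        Set.indicator_of_notMem (fun hh => h (hmem.mp hh))]
  calc
    (∫⁻ z : Euc N, (Metric.ball (0 : Euc N) R).indicator
        (fun z => ENNReal.ofReal (‖z‖ ^ (1 - (N:ℝ) - s))) z)
        = ∫⁻ z : Euc N, F ‖z‖ := lintegral_congr hKF
    _ = (volume : Measure (Euc N)).toSphere Set.univ *
          ∫⁻ y in Set.Ioi (0:ℝ), ENNReal.ofReal (y ^ (N - 1)) * F y :=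
      lintegral_fun_norm N hN F hFmeas
    _ = ENNReal.ofReal (sphereMeasure N) * ENNReal.ofReal (R ^ (1 - s) / (1 - s)) := by
      rw [toSphere_univ N hN]
      congr 1
      have key : ∀ y ∈ Set.Ioi (0:ℝ), ENNReal.ofReal (y ^ (N - 1)) * F y
          = (Set.Iio R).indicator (fun y => ENNReal.ofReal (y ^ (-s))) y := by
        intro y hy
        have hy0 : (0:ℝ) < y := hy
        by_cases h : y ∈ Set.Iio R
        · rw [hF]
          simp only [Set.indicator_of_mem h]
          rw [← ENNReal.ofReal_mul (by positivity)]
          congr 1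
          rw [← Real.rpow_natCast y (N - 1), ← Real.rpow_add hy0]
          congr 1
          rw [Nat.cast_sub hN]
          push_cast
          ring
        · rw [hF]
          simp [Set.indicator_of_notMem h]
      rw [setLIntegral_congr_fun measurableSet_Ioi key]
      rw [lintegral_indicator measurableSet_Iio, Measure.restrict_restrict measurableSet_Iio]
      have : Set.Iio R ∩ Set.Ioi 0 = Set.Ioo 0 R := by
        ext t; simp [Set.mem_Ioo, and_comm]
      rw [this]
      -- now compute ∫⁻ y in Ioo 0 R, ofReal (y ^ (-s))
      have hint : IntegrableOn (fun y : ℝ => y ^ (-s)) (Set.Ioo 0 R) := by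
        have h1 : IntervalIntegrable (fun y : ℝ => y ^ (-s)) volume 0 R :=
          intervalIntegral.intervalIntegrable_rpow' (by linarith)
        have := (intervalIntegrable_iff_integrableOn_Ioc_of_le hR.le).mp h1
        exact this.mono_set Set.Ioo_subset_Ioc_self
      rw [← ofReal_integral_eq_lintegral_ofReal hint
        (ae_restrict_of_forall_mem measurableSet_Ioo fun y hy => rpow_nonneg hy.1.le _)]
      congr 1
      have : ∫ y in Set.Ioo 0 R, y ^ (-s) = ∫ y in Set.Ioc 0 R, y ^ (-s) :=
        setIntegral_congr_set Ioo_ae_eq_Ioc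
      rw [this, ← intervalIntegral.integral_of_le hR.le,
        integral_rpow (Or.inl (by linarith))]
      rw [Real.zero_rpow (by linarith : -s + 1 ≠ 0)]
      ring_nf
    _ = ENNReal.ofReal (sphereMeasure N / (1 - s) * R ^ (1 - s)) := by
      rw [← ENNReal.ofReal_mul (by
        have hN2 : (0:ℝ) < (N : ℝ) / 2 := by positivity
        have hΓ : 0 < Real.Gamma ((N : ℝ) / 2) := Real.Gamma_pos_of_pos hN2
        rw [sphereMeasure]; positivity)]
      congr 1
      ring

lemma sphereMeasure_nonneg (N : ℕ) (hN : 1 ≤ N) : 0 ≤ sphereMeasure N := by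
  have hN2 : (0:ℝ) < (N : ℝ) / 2 := by positivity
  have hΓ : 0 < Real.Gamma ((N : ℝ) / 2) := Real.Gamma_pos_of_pos hN2
  rw [sphereMeasure]
  positivity

/-- Near-field bound for the commutator kernel: for `φ` Lipschitz with constant `L` and
`w ∈ L^p(ℝ^N)`,
`∫ (∫_{B_R(x)} |φ(x)-φ(y)||w(y)|/|x-y|^{N+s} dy)^p dx
  ≤ (ω_{N-1}/(1-s))^p R^{(1-s)p} L^p ‖w‖_p^p`. -/
theorem stmt5 (N : ℕ) (hN : 1 ≤ N) (s : ℝ) (hs : s ∈ Set.Ioo (0 : ℝ) 1)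
    (p : ℝ) (hp : 1 ≤ p) (R : ℝ) (hR : 0 < R)
    (φ : Euc N → ℝ) (L : ℝ≥0) (hφ : LipschitzWith L φ)
    (w : Euc N → ℝ) (hw : MemLp w (ENNReal.ofReal p)) :
    ∫⁻ x, (∫⁻ y in Metric.ball x R,
        ENNReal.ofReal (|φ x - φ y| * |w y| / ‖x - y‖ ^ ((N : ℝ) + s))) ^ p
      ≤ ENNReal.ofReal ((sphereMeasure N / (1 - s)) ^ p * R ^ ((1 - s) * p) * (L : ℝ) ^ p)
        * ∫⁻ x, ENNReal.ofReal (|w x| ^ p) := by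
  obtain ⟨hs0, hs1⟩ := hs
  have hp0 : (0:ℝ) ≤ p := by linarith
  set K : Euc N → ℝ≥0∞ := fun z => (Metric.ball (0 : Euc N) R).indicator
    (fun z => ENNReal.ofReal (‖z‖ ^ (1 - (N:ℝ) - s))) z with hKdef
  have hKmeas : Measurable K := by
    apply Measurable.indicator _ measurableSet_ball
    fun_prop
  -- measurable representative of w
  have hwm : AEMeasurable w (volume : Measure (Euc N)) := hw.1.aemeasurable
  set v : Euc N → ℝ := hwm.mk w with hvdef
  have hvmeas : Measurable v := hwm.measurable_mk
  have hv : w =ᵐ[volume] v := hwm.ae_eq_mk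
  set g : Euc N → ℝ≥0∞ := fun y => ENNReal.ofReal |v y| with hgdef
  have hgmeas : Measurable g := hvmeas.abs.ennreal_ofReal
  -- Step 1: pointwise bound on inner integral
  have step1 : ∀ x : Euc N, (∫⁻ y in Metric.ball x R,
      ENNReal.ofReal (|φ x - φ y| * |w y| / ‖x - y‖ ^ ((N : ℝ) + s)))
      ≤ (L : ℝ≥0∞) * ∫⁻ y, K (x - y) * g y := by
    intro x
    have b1 : (∫⁻ y in Metric.ball x R,
        ENNReal.ofReal (|φ x - φ y| * |w y| / ‖x - y‖ ^ ((N : ℝ) + s)))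
        ≤ ∫⁻ y in Metric.ball x R, (L : ℝ≥0∞) * (K (x - y) * ENNReal.ofReal |w y|) := by
      refine lintegral_mono_ae ?_
      filter_upwards [ae_restrict_mem measurableSet_ball] with y hy
      have hxy : x - y ∈ Metric.ball (0 : Euc N) R := by
        rw [mem_ball_zero_iff]
        rw [Metric.mem_ball, dist_comm] at hy
        rw [← dist_eq_norm]
        exact hy
      have hKval : K (x - y) = ENNReal.ofReal (‖x - y‖ ^ (1 - (N:ℝ) - s)) := by
        rw [hKdef]; simp only [Set.indicator_of_mem hxy]
      set d : ℝ := ‖x - y‖ with hd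
      have hd0 : 0 ≤ d := norm_nonneg _
      have hlip : |φ x - φ y| ≤ (L : ℝ) * d := by
        have := hφ.dist_le_mul x y
        rwa [Real.dist_eq, dist_eq_norm] at this
      have hreal : |φ x - φ y| * |w y| / d ^ ((N : ℝ) + s)
          ≤ (L : ℝ) * (d ^ (1 - (N:ℝ) - s) * |w y|) := by
        have hN1 : (1:ℝ) ≤ (N:ℝ) := by exact_mod_cast hN
        have hNs : (1 - (N:ℝ) - s) ≠ 0 := by nlinarith
        rcases eq_or_lt_of_le hd0 with h0 | h0
        · rw [← h0, Real.zero_rpow (by positivity : ((N:ℝ) + s) ≠ 0), div_zero,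
            Real.zero_rpow hNs, zero_mul, mul_zero]
        · have h2 : d ^ (1 - (N:ℝ) - s) = d * (d ^ ((N:ℝ) + s))⁻¹ := by
            rw [show (1 - (N:ℝ) - s) = 1 + (-((N:ℝ) + s)) by ring, Real.rpow_add h0,
              Real.rpow_one, Real.rpow_neg hd0]
          rw [div_eq_mul_inv, h2]
          have hinv : (0:ℝ) ≤ (d ^ ((N:ℝ) + s))⁻¹ := by positivity
          calc |φ x - φ y| * |w y| * (d ^ ((N:ℝ) + s))⁻¹
              ≤ ((L : ℝ) * d) * |w y| * (d ^ ((N:ℝ) + s))⁻¹ := by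
                gcongr
            _ = (L : ℝ) * (d * (d ^ ((N:ℝ) + s))⁻¹ * |w y|) := by ring
      calc ENNReal.ofReal (|φ x - φ y| * |w y| / d ^ ((N : ℝ) + s))
          ≤ ENNReal.ofReal ((L : ℝ) * (d ^ (1 - (N:ℝ) - s) * |w y|)) :=
            ENNReal.ofReal_le_ofReal hreal
        _ = (L : ℝ≥0∞) * (K (x - y) * ENNReal.ofReal |w y|) := by
            rw [ENNReal.ofReal_mul L.coe_nonneg,
              ENNReal.ofReal_mul (Real.rpow_nonneg hd0 _), hKval,
              ENNReal.ofReal_coe_nnreal]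
    refine b1.trans ?_
    refine (setLIntegral_le_lintegral _ _).trans ?_
    rw [lintegral_const_mul' _ _ ENNReal.coe_ne_top]
    refine mul_le_mul_right (le_of_eq ?_) _
    refine lintegral_congr_ae ?_
    filter_upwards [hv] with y hy
    rw [hgdef]
    simp only [hy]
  -- Step 2: integrate, apply Young
  have hconst_ne : ((L : ℝ≥0∞)) ^ p ≠ ⊤ :=
    ENNReal.rpow_ne_top_of_nonneg hp0 ENNReal.coe_ne_top
  calc
    ∫⁻ x, (∫⁻ y in Metric.ball x R,
        ENNReal.ofReal (|φ x - φ y| * |w y| / ‖x - y‖ ^ ((N : ℝ) + s))) ^ p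
        ≤ ∫⁻ x : Euc N, ((L : ℝ≥0∞) * ∫⁻ y, K (x - y) * g y) ^ p :=
      lintegral_mono fun x => ENNReal.rpow_le_rpow (step1 x) hp0
    _ = ∫⁻ x : Euc N, (L : ℝ≥0∞) ^ p * (∫⁻ y, K (x - y) * g y) ^ p :=
      lintegral_congr fun x => ENNReal.mul_rpow_of_nonneg _ _ hp0
    _ = (L : ℝ≥0∞) ^ p * ∫⁻ x : Euc N, (∫⁻ y, K (x - y) * g y) ^ p :=
      lintegral_const_mul' _ _ hconst_ne
    _ ≤ (L : ℝ≥0∞) ^ p * ((∫⁻ z, K z) ^ p * ∫⁻ y, g y ^ p) :=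
      mul_le_mul_right (young N K g hKmeas hgmeas hp) _
    _ = ENNReal.ofReal ((sphereMeasure N / (1 - s)) ^ p * R ^ ((1 - s) * p) * (L : ℝ) ^ p)
        * ∫⁻ x, ENNReal.ofReal (|w x| ^ p) := by
      rw [kernel_lintegral N hN s ⟨hs0, hs1⟩ R hR]
      have hg_int : (∫⁻ y, g y ^ p) = ∫⁻ x, ENNReal.ofReal (|w x| ^ p) := by
        refine lintegral_congr_ae ?_
        filter_upwards [hv] with y hy
        rw [hgdef]
        simp only [hy]
        rw [ENNReal.ofReal_rpow_of_nonneg (abs_nonneg _) hp0]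
      rw [hg_int]
      have hσ : 0 ≤ sphereMeasure N / (1 - s) * R ^ (1 - s) := by
        have := sphereMeasure_nonneg N hN
        have h1s : (0:ℝ) < 1 - s := by linarith
        positivity
      rw [ENNReal.ofReal_rpow_of_nonneg hσ hp0, ← mul_assoc]
      congr 1
      rw [show ((L : ℝ≥0∞)) = ENNReal.ofReal (L : ℝ) from (ENNReal.ofReal_coe_nnreal).symm,
        ENNReal.ofReal_rpow_of_nonneg L.coe_nonneg hp0,
        ← ENNReal.ofReal_mul (by positivity)]
      congr 1
      have h1s : (0:ℝ) < 1 - s := by linarith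
      have hσ2 : (0:ℝ) ≤ sphereMeasure N / (1 - s) :=
        div_nonneg (sphereMeasure_nonneg N hN) h1s.le
      rw [Real.mul_rpow hσ2 (Real.rpow_nonneg hR.le _), ← Real.rpow_mul hR.le]
      ring
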